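/- arXiv:1905.09149 — 3 statements merged into one kernel-verified Lean document; each statement's English description precedes it below -/
import Mathlib

section
/- Suppose J is invertible with ‖J⁻¹‖ ≤ κ and ‖J⁻¹F‖ ≤ δ, and let κ_e ≥ κ, δ_e ≥ δ. If ‖G‖ < δ_e/κ_e - δ/κ and ‖J⁻¹E‖ < 1 - κ/κ_e, then ‖(J + E)⁻¹(F + G)‖ ≤ δ_e. -/
open scoped Matrix.Norms.L2Operator

/-!
With `B = J⁻¹ E`, the solution `y` of `(J + E) y = F + G` satisfies `y = J⁻¹ (F + G) - B y`, so
`‖y‖ (1 - ‖B‖) ≤ ‖J⁻¹ F‖ + ‖J⁻¹‖ ‖G‖ ≤ δ + κ ‖G‖ < δ_e κ / κ_e`, while `1 - ‖B‖ > κ / κ_e`.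
-/

open Matrix WithLp

namespace Matrix

variable {𝕜 m : Type*} [RCLike 𝕜] [Fintype m] [DecidableEq m]

theorem norm_toLp_mul_one_sub_le_of_add_mulVec_eq {B : Matrix m m 𝕜} {y w : m → 𝕜}
    (h : y + B *ᵥ y = w) : ‖toLp 2 y‖ * (1 - ‖B‖) ≤ ‖toLp 2 w‖ := by
  have hy : toLp 2 y = toLp 2 w - toLp 2 (B *ᵥ y) := by
    rw [← h, ← toLp_sub, add_sub_cancel_right]
  have hBy : ‖toLp 2 (B *ᵥ y)‖ ≤ ‖B‖ * ‖toLp 2 y‖ := l2_opNorm_mulVec B (toLp 2 y)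
  have := hy ▸ norm_sub_le (toLp 2 w) (toLp 2 (B *ᵥ y))
  nlinarith

theorem norm_toLp_mul_one_sub_le_of_mulVec_eq {J E : Matrix m m 𝕜} (hJ : IsUnit J)
    {y v : m → 𝕜} (h : (J + E) *ᵥ y = v) :
    ‖toLp 2 y‖ * (1 - ‖J⁻¹ * E‖) ≤ ‖toLp 2 (J⁻¹ *ᵥ v)‖ := by
  refine norm_toLp_mul_one_sub_le_of_add_mulVec_eq ?_
  rw [← h, mulVec_mulVec, mul_add, add_mulVec,
    nonsing_inv_mul J ((isUnit_iff_isUnit_det J).mp hJ), one_mulVec]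

theorem isUnit_add_of_norm_inv_mul_lt_one {J E : Matrix m m 𝕜} (hJ : IsUnit J)
    (hE : ‖J⁻¹ * E‖ < 1) : IsUnit (J + E) := by
  have hJE : J + E = J * (1 - -(J⁻¹ * E)) := by
    rw [sub_neg_eq_add, mul_add, mul_one, ← Matrix.mul_assoc,
      mul_nonsing_inv J ((isUnit_iff_isUnit_det J).mp hJ), Matrix.one_mul]
  exact hJE ▸ hJ.mul (isUnit_one_sub_of_norm_lt_one (by rwa [norm_neg]))

end Matrix

theorem stmt2_general {n : ℕ} (J E : Matrix (Fin n) (Fin n) ℝ)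
    (F G : EuclideanSpace ℝ (Fin n)) (κ κe δ δe : ℝ)
    (hκ : 0 < κ) (hκe : 0 < κe)
    (hJ : IsUnit J) (hJinv : ‖J⁻¹‖ ≤ κ)
    (hJF : ‖(WithLp.equiv 2 (Fin n → ℝ)).symm (J⁻¹.mulVec F)‖ ≤ δ)
    (hG : ‖G‖ < δe / κe - δ / κ)
    (hE : ‖J⁻¹ * E‖ < 1 - κ / κe) :
    ‖(WithLp.equiv 2 (Fin n → ℝ)).symm ((J + E)⁻¹.mulVec (F + G))‖ ≤ δe := by
  set y := (J + E)⁻¹ *ᵥ (F + G)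
  have hr : 0 < κ / κe := div_pos hκ hκe
  have hJE : IsUnit (J + E) := isUnit_add_of_norm_inv_mul_lt_one hJ (by linarith)
  have hy : (J + E) *ᵥ y = F + G := by
    rw [mulVec_mulVec, mul_nonsing_inv _ ((isUnit_iff_isUnit_det _).mp hJE), one_mulVec]
  have hJG : ‖toLp 2 (J⁻¹ *ᵥ G)‖ ≤ κ * ‖G‖ :=
    (l2_opNorm_mulVec J⁻¹ G).trans (by gcongr)
  have hrhs : ‖toLp 2 (J⁻¹ *ᵥ (F + G))‖ ≤ δ + κ * ‖G‖ := by
    rw [mulVec_add, toLp_add]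
    exact (norm_add_le _ _).trans (add_le_add hJF hJG)
  have hκG : δ + κ * ‖G‖ < δe * (κ / κe) := by
    calc δ + κ * ‖G‖ < δ + κ * (δe / κe - δ / κ) := by gcongr
      _ = δe * (κ / κe) := by field_simp; ring
  refine le_of_mul_le_mul_right ?_ hr
  calc ‖toLp 2 y‖ * (κ / κe) ≤ ‖toLp 2 y‖ * (1 - ‖J⁻¹ * E‖) := by gcongr; linarith
    _ ≤ ‖toLp 2 (J⁻¹ *ᵥ (F + G))‖ := norm_toLp_mul_one_sub_le_of_mulVec_eq hJ hy
    _ ≤ δe * (κ / κe) := by linarith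

/-- If `J` is invertible with `‖J⁻¹‖ ≤ κ` and `‖J⁻¹ F‖ ≤ δ`, `κ_e ≥ κ`, `δ_e ≥ δ`,
`‖G‖ < δ_e/κ_e - δ/κ` and `‖J⁻¹ E‖ < 1 - κ/κ_e`, then `‖(J + E)⁻¹ (F + G)‖ ≤ δ_e`.
Vector norms are Euclidean, matrix norms are the induced operator norms. -/
theorem stmt2 {n : ℕ} (J E : Matrix (Fin n) (Fin n) ℝ)
    (F G : EuclideanSpace ℝ (Fin n)) (κ κe δ δe : ℝ)
    (hκ : 0 < κ) (hκe : 0 < κe) (hδ : 0 < δ) (hδe : 0 < δe)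
    (hκle : κ ≤ κe) (hδle : δ ≤ δe)
    (hJ : IsUnit J) (hJinv : ‖J⁻¹‖ ≤ κ)
    (hJF : ‖(WithLp.equiv 2 (Fin n → ℝ)).symm (J⁻¹.mulVec F)‖ ≤ δ)
    (hG : ‖G‖ < δe / κe - δ / κ)
    (hE : ‖J⁻¹ * E‖ < 1 - κ / κe) :
    ‖(WithLp.equiv 2 (Fin n → ℝ)).symm ((J + E)⁻¹.mulVec (F + G))‖ ≤ δe :=
  stmt2_general J E F G κ κe δ δe hκ hκe hJ hJinv hJF hG hE
end

section
/- Let f : ℝ → ℝ be differentiable with derivative f' Lipschitz with constant λ on a convex open set D, let x₀ ∈ D with f'(x₀) ≠ 0, set κ = 1/|f'(x₀)|, δ = |f(x₀)/f'(x₀)|, and h = 2κλδ. If h ≤ 1 and the closed ball of radius t* = (2/h)(1-√(1-h))δ around x₀ is contained in D, then f has a zero in that closed ball. -/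
/-!
Walk from `x₀` the distance `t*` in the Newton direction `-f(x₀)/f'(x₀)`, reaching `y`. The
Lipschitz bound on `f'` gives `|f y - f x₀ - f'(x₀)(y - x₀)| ≤ λ t*²/2`, and `t*` is a root of the
Kantorovich majorant `λ t²/2 - |f'(x₀)| t + |f(x₀)|`; together these force `f y · f x₀ ≤ 0`, and the
intermediate value theorem yields a zero between `x₀` and `y`.
-/

open Set Metric

section Taylor

variable {E : Type*} [NormedAddCommGroup E] [NormedSpace ℝ E]

theorem norm_image_sub_sub_smul_deriv_le_of_le {f f' : ℝ → E} {a b lam : ℝ} (hab : a ≤ b)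
    (hf : ∀ x ∈ Icc a b, HasDerivAt f (f' x) x)
    (hlip : ∀ x ∈ Icc a b, ‖f' x - f' a‖ ≤ lam * (x - a)) :
    ‖f b - f a - (b - a) • f' a‖ ≤ lam / 2 * (b - a) ^ 2 := by
  have hg : ∀ x ∈ Icc a b,
      HasDerivAt (fun x => f x - f a - (x - a) • f' a) (f' x - f' a) x := fun x hx =>
    (((hf x hx).sub_const (f a)).sub
      (((hasDerivAt_id' x).sub_const a).smul_const (f' a))).congr_deriv (by rw [one_smul])
  have hB : ∀ x, HasDerivAt (fun x => lam / 2 * (x - a) ^ 2) (lam * (x - a)) x := fun x =>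
    ((((hasDerivAt_id' x).sub_const a).pow 2).const_mul (lam / 2)).congr_deriv
      (by norm_num; ring)
  refine image_norm_le_of_norm_deriv_right_le_deriv_boundary
    (fun x hx => (hg x hx).continuousAt.continuousWithinAt)
    (fun x hx => (hg x (Ico_subset_Icc_self hx)).hasDerivWithinAt) (by simp) hB
    (fun x hx => hlip x (Ico_subset_Icc_self hx)) (right_mem_Icc.2 hab)

theorem norm_image_sub_sub_smul_deriv_le {f f' : ℝ → E} {a b lam : ℝ}
    (hf : ∀ x ∈ uIcc a b, HasDerivAt f (f' x) x)
    (hlip : ∀ x ∈ uIcc a b, ‖f' x - f' a‖ ≤ lam * |x - a|) :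
    ‖f b - f a - (b - a) • f' a‖ ≤ lam / 2 * (b - a) ^ 2 := by
  rcases le_total a b with hab | hba
  · rw [uIcc_of_le hab] at hf hlip
    refine norm_image_sub_sub_smul_deriv_le_of_le hab hf fun x hx => ?_
    simpa [abs_of_nonneg (sub_nonneg.2 hx.1)] using hlip x hx
  · rw [uIcc_of_ge hba] at hf hlip
    have hneg : ∀ x ∈ Icc (-a) (-b), -x ∈ Icc b a := fun x hx =>
      ⟨le_neg_of_le_neg hx.2, neg_le.1 hx.1⟩
    have := norm_image_sub_sub_smul_deriv_le_of_le (f := fun x => f (-x))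
      (f' := fun x => -f' (-x)) (lam := lam) (neg_le_neg hba)
      (fun x hx => by
        simpa [Function.comp_def] using (hf (-x) (hneg x hx)).scomp x (hasDerivAt_neg x))
      (fun x hx => by
        have habs : |-x - a| = x - -a := by rw [abs_of_nonpos (by linarith [hx.1])]; ring
        rw [neg_neg, neg_sub_neg, norm_sub_rev, ← habs]
        exact hlip (-x) (hneg x hx))
    rw [show -b - -a = -(b - a) by ring, neg_sq, neg_smul, smul_neg] at this
    simpa only [neg_neg] using this

end Taylor

theorem exists_mem_closedBall_eq_zero_of_majorant_nonpos {f f' : ℝ → ℝ} {x₀ lam t : ℝ}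
    (ht : 0 ≤ t) (hf : ∀ x ∈ closedBall x₀ t, HasDerivAt f (f' x) x)
    (hlip : ∀ x ∈ closedBall x₀ t, |f' x - f' x₀| ≤ lam * |x - x₀|)
    (hmaj : lam / 2 * t ^ 2 - |f' x₀| * t + |f x₀| ≤ 0) :
    ∃ x ∈ closedBall x₀ t, f x = 0 := by
  -- `y` is `x₀` moved by `t` in the Newton direction `-f x₀ / f' x₀`
  obtain ⟨σ, hσ, hσff'⟩ : ∃ σ : ℝ, |σ| = 1 ∧ f x₀ * f' x₀ * σ = |f x₀ * f' x₀| := by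
    rcases le_total 0 (f x₀ * f' x₀) with hpos | hneg
    · exact ⟨1, abs_one, by rw [mul_one, abs_of_nonneg hpos]⟩
    · exact ⟨-1, by simp, by rw [mul_neg_one, abs_of_nonpos hneg]⟩
  set y := x₀ - t * σ
  have hyx₀ : |y - x₀| = t := by simp [y, abs_mul, hσ, abs_of_nonneg ht]
  have hy : y ∈ closedBall x₀ t := by rw [mem_closedBall, Real.dist_eq, hyx₀]
  have hseg : uIcc x₀ y ⊆ closedBall x₀ t :=
    (convex_closedBall x₀ t).ordConnected.uIcc_subset (mem_closedBall_self ht) hy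
  have htaylor : |f y - f x₀ - (y - x₀) * f' x₀| ≤ lam / 2 * t ^ 2 := by
    simpa only [Real.norm_eq_abs, smul_eq_mul, ← sq_abs (y - x₀), hyx₀] using
      norm_image_sub_sub_smul_deriv_le (fun x hx => hf x (hseg hx))
        (fun x hx => by simpa only [Real.norm_eq_abs] using hlip x (hseg hx))
  have hsign : f y * f x₀ ≤ 0 := by
    set E := f y - f x₀ - (y - x₀) * f' x₀
    have hfy : f y * f x₀ = |f x₀| ^ 2 - t * (|f x₀| * |f' x₀|) + E * f x₀ := by
      rw [sq_abs, ← abs_mul, ← hσff']; simp only [E, y]; ring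
    have hE : E * f x₀ ≤ lam / 2 * t ^ 2 * |f x₀| := by
      calc E * f x₀ ≤ |E| * |f x₀| := by rw [← abs_mul]; exact le_abs_self _
        _ ≤ lam / 2 * t ^ 2 * |f x₀| := by gcongr
    nlinarith [abs_nonneg (f x₀)]
  have hzero : (0 : ℝ) ∈ uIcc (f x₀) (f y) := by
    rcases mul_nonpos_iff.1 hsign with h | h
    exacts [mem_uIcc.2 (Or.inl h.symm), mem_uIcc.2 (Or.inr h)]
  obtain ⟨x, hx, hfx⟩ := intermediate_value_uIcc
    (fun x hx => (hf x (hseg hx)).continuousAt.continuousWithinAt) hzero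
  exact ⟨x, hseg hx, hfx⟩

theorem kantorovich_radius_nonneg {h δ : ℝ} (hh : 0 ≤ h) (hδ : 0 ≤ δ) :
    0 ≤ 2 / h * (1 - √(1 - h)) * δ := by
  have : 0 ≤ 1 - √(1 - h) := sub_nonneg.2 (Real.sqrt_le_one.2 (by linarith))
  positivity

theorem kantorovich_majorant_radius_eq_zero {A lam δ h : ℝ} (hA : 0 < A) (hlam : 0 < lam)
    (hh : h = 2 * (1 / A) * lam * δ) (hle : h ≤ 1) :
    let t := 2 / h * (1 - √(1 - h)) * δ
    lam / 2 * t ^ 2 - A * t + A * δ = 0 := by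
  intro t
  rcases eq_or_ne h 0 with h0 | h0
  · have hδ : δ = 0 := by
      rw [h0, eq_comm] at hh
      exact (mul_eq_zero.1 hh).resolve_left (by positivity)
    simp [t, hδ]
  · have hr : √(1 - h) ^ 2 = 1 - h := Real.sq_sqrt (by linarith)
    have hδ : δ = h * A / (2 * lam) := by rw [hh]; field_simp
    simp only [t, hδ]
    field_simp
    linear_combination A ^ 2 * hr

theorem stmt7_general (D : Set ℝ)
    (f f' : ℝ → ℝ) (hf : ∀ x ∈ D, HasDerivAt f (f' x) x)
    (lam : ℝ) (hlam : 0 < lam)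
    (hlip : ∀ x ∈ D, ∀ y ∈ D, |f' x - f' y| ≤ lam * |x - y|)
    (x₀ : ℝ) (hf' : f' x₀ ≠ 0)
    (κ δ h tstar : ℝ)
    (hκ : κ = 1 / |f' x₀|) (hδ : δ = |f x₀ / f' x₀|)
    (hh : h = 2 * κ * lam * δ) (hle : h ≤ 1)
    (htstar : tstar = (2 / h) * (1 - Real.sqrt (1 - h)) * δ)
    (hball : Metric.closedBall x₀ tstar ⊆ D) :
    ∃ x ∈ Metric.closedBall x₀ tstar, f x = 0 := by
  subst hκ htstar
  have hA : 0 < |f' x₀| := abs_pos.2 hf'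
  have hδ₀ : 0 ≤ δ := hδ ▸ abs_nonneg _
  have ht : 0 ≤ 2 / h * (1 - √(1 - h)) * δ :=
    kantorovich_radius_nonneg (hh ▸ by positivity) hδ₀
  have hfx₀ : |f x₀| = |f' x₀| * δ := by rw [hδ, abs_div]; field_simp
  refine exists_mem_closedBall_eq_zero_of_majorant_nonpos ht (fun x hx => hf x (hball hx))
    (fun x hx => hlip x (hball hx) x₀ (hball (mem_closedBall_self ht))) ?_
  rw [hfx₀, kantorovich_majorant_radius_eq_zero hA hlam hh hle]

/-- One-dimensional Newton–Kantorovich theorem: if `f : ℝ → ℝ` has a derivative `f'`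
on an open convex set `D`, `f'` is `λ`-Lipschitz on `D`, `x₀ ∈ D`, `f'(x₀) ≠ 0`,
`κ = 1/|f'(x₀)|`, `δ = |f(x₀)/f'(x₀)|`, `h = 2κλδ ≤ 1`, and the closed ball of radius
`t* = (2/h)(1-√(1-h))δ` about `x₀` is contained in `D`, then `f` has a zero in that ball. -/
theorem stmt7 (D : Set ℝ) (hD : IsOpen D) (hDconv : Convex ℝ D)
    (f f' : ℝ → ℝ) (hf : ∀ x ∈ D, HasDerivAt f (f' x) x)
    (lam : ℝ) (hlam : 0 < lam)
    (hlip : ∀ x ∈ D, ∀ y ∈ D, |f' x - f' y| ≤ lam * |x - y|)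
    (x₀ : ℝ) (hx₀ : x₀ ∈ D) (hf' : f' x₀ ≠ 0)
    (κ δ h tstar : ℝ)
    (hκ : κ = 1 / |f' x₀|) (hδ : δ = |f x₀ / f' x₀|)
    (hh : h = 2 * κ * lam * δ) (hle : h ≤ 1)
    (htstar : tstar = (2 / h) * (1 - Real.sqrt (1 - h)) * δ)
    (hball : Metric.closedBall x₀ tstar ⊆ D) :
    ∃ x ∈ Metric.closedBall x₀ tstar, f x = 0 :=
  stmt7_general D f f' hf lam hlam hlip x₀ hf' κ δ h tstar hκ hδ hh hle htstar hball
end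

section
/- Under Newton-Kantorovich hypotheses with h = 2κλδ ≤ 1, every Newton iterate x^{v} remains in the ball U(x⁰, t*), where t* = (2/h)(1-√(1-h))δ; in particular the sup norm of the limit x* is bounded by ‖x⁰‖ + t*. -/
/-!
The Newton iterates are majorized, in Kantorovich's sense, by Newton's method `t_{v+1} =
t_v + p(t_v) / (1 - κλ t_v)` for the scalar polynomial `p(t) = κλ t² / 2 - t + δ`, started at
`t_0 = 0`: by induction `‖x^v - x⁰‖ ≤ t_v` and `‖J(x⁰)⁻¹ f(x^v)‖ ≤ p(t_v)`. The scalar iterates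
increase towards the smallest root `t* = (1 - √(1 - h)) / (κλ)` of `p`, so every `x^v`, and hence
every limit of them, lies in the closed ball of radius `t*` about `x⁰`.
-/

open Set Metric

theorem norm_image_sub_sub_fderiv_le_of_lipschitz {E F : Type*} [NormedAddCommGroup E]
    [NormedSpace ℝ E] [NormedAddCommGroup F] [NormedSpace ℝ F]
    {f : E → F} {f' : E → E →L[ℝ] F} {lam : ℝ} {x y : E}
    (hf : ∀ z ∈ segment ℝ x y, HasFDerivAt f (f' z) z)
    (hlip : ∀ z ∈ segment ℝ x y, ‖f' z - f' x‖ ≤ lam * ‖z - x‖) :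
    ‖f y - f x - f' x (y - x)‖ ≤ lam / 2 * ‖y - x‖ ^ 2 := by
  set γ : ℝ → E := fun θ => x + θ • (y - x) with hγ
  have hγ_mem : ∀ θ ∈ Icc (0 : ℝ) 1, γ θ ∈ segment ℝ x y := fun θ hθ => by
    rw [segment_eq_image']
    exact ⟨θ, hθ, rfl⟩
  set g : ℝ → F := fun θ => f (γ θ) - θ • f' x (y - x) - f x with hg
  have hg_deriv : ∀ θ ∈ Icc (0 : ℝ) 1, HasDerivAt g ((f' (γ θ) - f' x) (y - x)) θ := by
    intro θ hθ
    have hγ_deriv : HasDerivAt γ (y - x) θ :=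
      (((hasDerivAt_id θ).smul_const (y - x)).const_add x).congr_deriv (one_smul _ _)
    have hlin : HasDerivAt (fun θ : ℝ => θ • f' x (y - x)) (f' x (y - x)) θ := by
      simpa using (hasDerivAt_id θ).smul_const (f' x (y - x))
    simpa [hg] using
      (((hf _ (hγ_mem θ hθ)).comp_hasDerivAt θ hγ_deriv).sub hlin).sub_const (f x)
  have hbound_deriv : ∀ θ : ℝ,
      HasDerivAt (fun θ : ℝ => lam * θ ^ 2 / 2 * ‖y - x‖ ^ 2) (lam * θ * ‖y - x‖ ^ 2) θ := by
    intro θ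
    exact ((((hasDerivAt_pow 2 θ).const_mul lam).div_const 2).mul_const _).congr_deriv
      (by push_cast; ring)
  have hg_deriv_le : ∀ θ ∈ Ico (0 : ℝ) 1,
      ‖(f' (γ θ) - f' x) (y - x)‖ ≤ lam * θ * ‖y - x‖ ^ 2 := by
    intro θ hθ
    have hγ_dist : ‖γ θ - x‖ = θ * ‖y - x‖ := by simp [hγ, norm_smul, abs_of_nonneg hθ.1]
    calc ‖(f' (γ θ) - f' x) (y - x)‖ ≤ ‖f' (γ θ) - f' x‖ * ‖y - x‖ :=
        (f' (γ θ) - f' x).le_opNorm _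
      _ ≤ lam * ‖γ θ - x‖ * ‖y - x‖ := by
          gcongr
          exact hlip _ (hγ_mem θ (Ico_subset_Icc_self hθ))
      _ = lam * θ * ‖y - x‖ ^ 2 := by rw [hγ_dist]; ring
  have key := image_norm_le_of_norm_deriv_right_le_deriv_boundary
    (fun θ hθ => (hg_deriv θ hθ).continuousAt.continuousWithinAt)
    (fun θ hθ => (hg_deriv θ (Ico_subset_Icc_self hθ)).hasDerivWithinAt)
    (by simp [hg, hγ]) hbound_deriv hg_deriv_le (right_mem_Icc.2 zero_le_one)
  have hg_one : g 1 = f y - f x - f' x (y - x) := by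
    simp only [hg, hγ, one_smul, add_sub_cancel]
    abel
  simpa [hg_one] using key

theorem norm_le_leftInverse_apply_add {E F : Type*} [NormedAddCommGroup E] [NormedSpace ℝ E]
    [NormedAddCommGroup F] [NormedSpace ℝ F] (A B : E →L[ℝ] F) (Ainv : F →L[ℝ] E)
    (hAinv : ∀ w, Ainv (A w) = w) (w : E) :
    ‖w‖ ≤ ‖Ainv (B w)‖ + ‖Ainv‖ * ‖A - B‖ * ‖w‖ := by
  have hw : w = Ainv (B w) + Ainv ((A - B) w) := by
    rw [← map_add, sub_apply, add_sub_cancel, hAinv]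
  calc ‖w‖ = ‖Ainv (B w) + Ainv ((A - B) w)‖ := congrArg norm hw
    _ ≤ ‖Ainv (B w)‖ + ‖Ainv ((A - B) w)‖ := norm_add_le _ _
    _ ≤ ‖Ainv (B w)‖ + ‖Ainv‖ * ‖A - B‖ * ‖w‖ := by
        rw [mul_assoc]
        gcongr
        exact (Ainv.le_opNorm _).trans (by gcongr; exact (A - B).le_opNorm w)

section Majorant

variable {a δ : ℝ}

noncomputable def kantorovichPoly (a δ t : ℝ) : ℝ := a * t ^ 2 / 2 - t + δ

/-- Newton's method for `kantorovichPoly a δ`, whose derivative is `a t - 1`, started at `0`. -/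
noncomputable def kantorovichSeq (a δ : ℝ) : ℕ → ℝ
  | 0 => 0
  | v + 1 => kantorovichSeq a δ v +
      kantorovichPoly a δ (kantorovichSeq a δ v) / (1 - a * kantorovichSeq a δ v)

theorem kantorovichPoly_eq_zero {t : ℝ} (ha : a ≠ 0) (hh : 2 * a * δ ≤ 1)
    (ht : a * t = 1 - √(1 - 2 * a * δ)) : kantorovichPoly a δ t = 0 := by
  have hs := Real.sq_sqrt (sub_nonneg.2 hh)
  have h2a : 2 * a * kantorovichPoly a δ t = 0 := by
    unfold kantorovichPoly
    linear_combination (a * t - 1 - √(1 - 2 * a * δ)) * ht + hs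
  simpa [ha] using h2a

theorem kantorovichPoly_add_of_mul_eq {t d : ℝ} (hd : (1 - a * t) * d = kantorovichPoly a δ t) :
    kantorovichPoly a δ (t + d) = a / 2 * d ^ 2 := by
  unfold kantorovichPoly at *
  linear_combination -hd

theorem kantorovichSeq_lt_root {tstar : ℝ} (ha : 0 < a) (hδ : 0 < δ)
    (hroot : kantorovichPoly a δ tstar = 0) (hat : a * tstar ≤ 1) (v : ℕ) :
    kantorovichSeq a δ v < tstar ∧ 0 ≤ kantorovichPoly a δ (kantorovichSeq a δ v) := by
  unfold kantorovichPoly at hroot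
  induction v with
  | zero =>
    refine ⟨show 0 < tstar by nlinarith [mul_nonneg ha.le (sq_nonneg tstar)], ?_⟩
    simpa [kantorovichSeq, kantorovichPoly] using hδ.le
  | succ v ih =>
    obtain ⟨ht, hpt⟩ := ih
    set t := kantorovichSeq a δ v
    have hpos : 0 < 1 - a * t := by nlinarith
    set d := kantorovichPoly a δ t / (1 - a * t)
    have hd : (1 - a * t) * d = kantorovichPoly a δ t := mul_div_cancel₀ _ hpos.ne'
    change t + d < tstar ∧ 0 ≤ kantorovichPoly a δ (t + d)
    rw [kantorovichPoly_add_of_mul_eq hd]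
    refine ⟨?_, by positivity⟩
    -- `p t = p t - p t* = (t* - t) (1 - a (t + t*) / 2) < (1 - a t) (t* - t)`
    have hlt : (1 - a * t) * d < (1 - a * t) * (tstar - t) := by
      rw [hd, kantorovichPoly]
      nlinarith [mul_pos ha (pow_pos (sub_pos.2 ht) 2)]
    linarith [lt_of_mul_lt_mul_left hlt hpos.le]

end Majorant

theorem newton_iterate_majorized {X : Type*} [NormedAddCommGroup X] [NormedSpace ℝ X]
    {D : Set X} {f : X → X} {J : X → X →L[ℝ] X} {lam κ δ tstar : ℝ} {x : ℕ → X}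
    {Jinv : X →L[ℝ] X}
    (hf : ∀ x ∈ D, HasFDerivAt f (J x) x)
    (hlip : ∀ x ∈ D, ∀ y ∈ D, ‖J x - J y‖ ≤ lam * ‖x - y‖)
    (hx0 : x 0 ∈ D) (hJinv : ∀ w, Jinv (J (x 0) w) = w)
    (hκ : 0 < κ) (hlam : 0 < lam) (hδ : 0 < δ) (hκb : ‖Jinv‖ ≤ κ) (hδb : ‖Jinv (f (x 0))‖ ≤ δ)
    (hroot : kantorovichPoly (κ * lam) δ tstar = 0) (hat : κ * lam * tstar ≤ 1)
    (hball : closedBall (x 0) tstar ⊆ D)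
    (hiter : ∀ v : ℕ, J (x v) (x (v + 1) - x v) = -f (x v)) (v : ℕ) :
    ‖x v - x 0‖ ≤ kantorovichSeq (κ * lam) δ v ∧
      ‖Jinv (f (x v))‖ ≤ kantorovichPoly (κ * lam) δ (kantorovichSeq (κ * lam) δ v) := by
  have ha : 0 < κ * lam := mul_pos hκ hlam
  have hseq := kantorovichSeq_lt_root ha hδ hroot hat
  induction v with
  | zero => simpa [kantorovichSeq, kantorovichPoly] using hδb
  | succ v ih =>
    obtain ⟨hxv, hfv⟩ := ih
    set t := kantorovichSeq (κ * lam) δ v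
    have hpos : 0 < 1 - κ * lam * t := by nlinarith [(hseq v).1]
    set d := kantorovichPoly (κ * lam) δ t / (1 - κ * lam * t)
    have hd : (1 - κ * lam * t) * d = kantorovichPoly (κ * lam) δ t := mul_div_cancel₀ _ hpos.ne'
    have hnext : t + d < tstar := (hseq (v + 1)).1
    change ‖x (v + 1) - x 0‖ ≤ t + d ∧ ‖Jinv (f (x (v + 1)))‖ ≤ kantorovichPoly _ _ (t + d)
    have hxv_mem : x v ∈ closedBall (x 0) tstar := by
      rw [mem_closedBall, dist_eq_norm]; linarith [(hseq v).1]
    have hstep : ‖x (v + 1) - x v‖ ≤ d := by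
      have hJ : ‖J (x 0) - J (x v)‖ ≤ lam * t := by
        rw [← norm_neg, neg_sub]
        exact (hlip _ (hball hxv_mem) _ hx0).trans (by gcongr)
      have h := norm_le_leftInverse_apply_add _ (J (x v)) _ hJinv (x (v + 1) - x v)
      rw [hiter v, map_neg, norm_neg] at h
      rw [le_div_iff₀ hpos]
      nlinarith [mul_le_mul hκb hJ (norm_nonneg _) hκ.le, norm_nonneg (x (v + 1) - x v)]
    have hxv1 : ‖x (v + 1) - x 0‖ ≤ t + d := by
      linarith [norm_sub_le_norm_sub_add_norm_sub (x (v + 1)) (x v) (x 0)]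
    refine ⟨hxv1, ?_⟩
    have hseg : segment ℝ (x v) (x (v + 1)) ⊆ D :=
      ((convex_closedBall _ _).segment_subset hxv_mem
        (by rw [mem_closedBall, dist_eq_norm]; linarith)).trans hball
    have htaylor := norm_image_sub_sub_fderiv_le_of_lipschitz (fun z hz => hf z (hseg hz))
      (fun z hz => hlip z (hseg hz) (x v) (hseg (left_mem_segment ℝ _ _)))
    rw [hiter v, sub_neg_eq_add, sub_add_cancel] at htaylor
    rw [kantorovichPoly_add_of_mul_eq hd]
    calc ‖Jinv (f (x (v + 1)))‖ ≤ ‖Jinv‖ * ‖f (x (v + 1))‖ := Jinv.le_opNorm _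
      _ ≤ κ * (lam / 2 * d ^ 2) :=
          mul_le_mul hκb (htaylor.trans (by gcongr)) (norm_nonneg _) hκ.le
      _ = κ * lam / 2 * d ^ 2 := by ring

theorem stmt18_general {X : Type*} [NormedAddCommGroup X] [NormedSpace ℝ X]
    (D : Set X)
    (f : X → X) (J : X → X →L[ℝ] X)
    (hf : ∀ x ∈ D, HasFDerivAt f (J x) x)
    (lam : ℝ) (hlam : 0 < lam)
    (hlip : ∀ x ∈ D, ∀ y ∈ D, ‖J x - J y‖ ≤ lam * ‖x - y‖)
    (x : ℕ → X) (hx0 : x 0 ∈ D)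
    (Jinv : X →L[ℝ] X)
    (hJinv : ∀ w : X, Jinv (J (x 0) w) = w ∧ J (x 0) (Jinv w) = w)
    (κ δ h tstar : ℝ) (hκ : 0 < κ) (hδ : 0 < δ)
    (hκb : ‖Jinv‖ ≤ κ) (hδb : ‖Jinv (f (x 0))‖ ≤ δ)
    (hh : h = 2 * κ * lam * δ) (hle : h ≤ 1)
    (htstar : tstar = (2 / h) * (1 - Real.sqrt (1 - h)) * δ)
    (hball : Metric.closedBall (x 0) tstar ⊆ D)
    (hiter : ∀ v : ℕ, J (x v) (x (v + 1) - x v) = -f (x v)) :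
    (∀ v : ℕ, x v ∈ Metric.closedBall (x 0) tstar) ∧
      ∀ xstar : X, Filter.Tendsto x Filter.atTop (nhds xstar) →
        ‖xstar‖ ≤ ‖x 0‖ + tstar := by
  have ha : 0 < κ * lam := mul_pos hκ hlam
  have hat : κ * lam * tstar = 1 - √(1 - 2 * (κ * lam) * δ) := by
    subst htstar hh
    field_simp
  have hh' : 2 * (κ * lam) * δ ≤ 1 := by linarith
  have hroot := kantorovichPoly_eq_zero ha.ne' hh' hat
  have hat_le : κ * lam * tstar ≤ 1 := by linarith [Real.sqrt_nonneg (1 - 2 * (κ * lam) * δ)]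
  have hmem : ∀ v, x v ∈ closedBall (x 0) tstar := fun v => by
    rw [mem_closedBall, dist_eq_norm]
    exact ((newton_iterate_majorized hf hlip hx0 (fun w => (hJinv w).1) hκ hlam hδ hκb hδb hroot
      hat_le hball hiter v).1).trans (kantorovichSeq_lt_root ha hδ hroot hat_le v).1.le
  refine ⟨hmem, fun xstar hlim => ?_⟩
  have hxstar := isClosed_closedBall.mem_of_tendsto hlim (Filter.Eventually.of_forall hmem)
  rw [mem_closedBall, dist_eq_norm] at hxstar
  linarith [norm_le_insert' xstar (x 0)]

/-- Under the Newton–Kantorovich hypotheses (`λ`-Lipschitz derivative `J` on an open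
convex `D`, `‖J(x⁰)⁻¹‖ ≤ κ`, `‖J(x⁰)⁻¹ f(x⁰)‖ ≤ δ`, `h = 2κλδ ≤ 1`, and the closed
ball of radius `t* = (2/h)(1-√(1-h))δ` about `x⁰` contained in `D`), every Newton
iterate `x^v` remains in the closed ball `U(x⁰, t*)`; in particular, any limit `x*` of
the iterates satisfies `‖x*‖ ≤ ‖x⁰‖ + t*`. -/
theorem stmt18 {X : Type*} [NormedAddCommGroup X] [NormedSpace ℝ X] [CompleteSpace X]
    (D : Set X) (hD : IsOpen D) (hDconv : Convex ℝ D)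
    (f : X → X) (J : X → X →L[ℝ] X)
    (hf : ∀ x ∈ D, HasFDerivAt f (J x) x)
    (lam : ℝ) (hlam : 0 < lam)
    (hlip : ∀ x ∈ D, ∀ y ∈ D, ‖J x - J y‖ ≤ lam * ‖x - y‖)
    (x : ℕ → X) (hx0 : x 0 ∈ D)
    (Jinv : X →L[ℝ] X)
    (hJinv : ∀ w : X, Jinv (J (x 0) w) = w ∧ J (x 0) (Jinv w) = w)
    (κ δ h tstar : ℝ) (hκ : 0 < κ) (hδ : 0 < δ)
    (hκb : ‖Jinv‖ ≤ κ) (hδb : ‖Jinv (f (x 0))‖ ≤ δ)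
    (hh : h = 2 * κ * lam * δ) (hle : h ≤ 1)
    (htstar : tstar = (2 / h) * (1 - Real.sqrt (1 - h)) * δ)
    (hball : Metric.closedBall (x 0) tstar ⊆ D)
    (hiter : ∀ v : ℕ, J (x v) (x (v + 1) - x v) = -f (x v)) :
    (∀ v : ℕ, x v ∈ Metric.closedBall (x 0) tstar) ∧
      ∀ xstar : X, Filter.Tendsto x Filter.atTop (nhds xstar) →
        ‖xstar‖ ≤ ‖x 0‖ + tstar :=
  stmt18_general D f J hf lam hlam hlip x hx0 Jinv hJinv κ δ h tstar hκ hδ hκb hδb hh hle htstar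
    hball hiter
end
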